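/- For every k ∈ G², the map ν ↦ F̃_ν(ĩ(k)) is a bijection from G² onto the fiber π̃₁⁻¹({k}); in particular, every fiber of the gauge-invariant coarse graining map π̃₁ is in bijection with G². -/
import Mathlib


/-- The induced refining map `ĩ : G² → G⁴`, `ĩ(k₁,k₂) = (k₁,1,1,k₂)`. -/
def refiningTil {G : Type*} [Group G] : G × G → G × G × G × G :=
  fun (k₁, k₂) => (k₁, 1, 1, k₂)

/-- The gauge-invariant coarse graining map `π̃₁ : G⁴ → G²`. -/
def coarseTil₁ {G : Type*} [Group G] : G × G × G × G → G × G :=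
  fun (h₁, h₂, h₃, h₄) => (h₁, h₄ * h₃ * h₂)

/-- The gauge-invariant family of maps `F̃_ν : G⁴ → G⁴` for `ν = (ν₁,ν₂) ∈ G²`. -/
def Ftil {G : Type*} [Group G] :
    G × G → (G × G × G × G) → G × G × G × G :=
  fun (ν₁, ν₂) (h₁, h₂, h₃, h₄) => (h₁, ν₁ * h₂, ν₂ * h₃ * ν₁⁻¹, h₄ * ν₂⁻¹)

/-- For every `k ∈ G²`, the map `ν ↦ F̃_ν(ĩ(k))` is a bijection from `G²` onto
the fiber `π̃₁⁻¹({k})`; in particular, every fiber of the gauge-invariant coarse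
graining map `π̃₁` is in bijection with `G²`. -/
theorem Ftil_bijOn_fiber {G : Type*} [Group G] (k : G × G) :
    Set.BijOn (fun ν : G × G => Ftil ν (refiningTil k))
      Set.univ (coarseTil₁ ⁻¹' {k}) := by
  obtain ⟨k₁, k₂⟩ := k
  refine ⟨fun ν _ => ?_, fun ν _ μ _ h => ?_, fun h hh => ?_⟩
  · obtain ⟨ν₁, ν₂⟩ := ν
    simp [Ftil, refiningTil, coarseTil₁, mul_assoc]
  · obtain ⟨ν₁, ν₂⟩ := ν
    obtain ⟨μ₁, μ₂⟩ := μ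
    simp only [Ftil, refiningTil, Prod.mk.injEq, mul_one] at h
    obtain ⟨-, h1, h2, -⟩ := h
    exact Prod.ext h1 (by
      have := congrArg (· * ν₁) h2
      simpa [h1, mul_assoc] using this)
  · obtain ⟨h₁, h₂, h₃, h₄⟩ := h
    simp only [Set.mem_preimage, coarseTil₁, Set.mem_singleton_iff,
      Prod.mk.injEq] at hh
    refine ⟨(h₂, h₃ * h₂), Set.mem_univ _, ?_⟩
    simp only [Ftil, refiningTil, Prod.mk.injEq, mul_one]
    refine ⟨hh.1.symm, trivial, by group, ?_⟩
    rw [← hh.2]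
    group
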